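/- Let μ be a Borel probability measure on ℝ with compact support which is not a point mass, and let α ∈ (0,1). Then the set A_α := {c ∈ ℝ : there exists w ∈ ℂ ∖ ℝ with w·G_μ(w + c) = 1 − α} is an open subset of ℝ. -/

import Mathlib

/-!
Where `G_μ z ≠ 0`, the equation `(z - c) G_μ(z) = 1 - α` (with `z = w + c`) says exactly that
`c = Φ z` with `Φ z := z - (1 - α) / G_μ(z)`, so `A_α` is the trace on `ℝ` of the image under `Φ`
of the open set `{z | z.im ≠ 0 ∧ G_μ z ≠ 0}`. By the open mapping theorem this image is open unless
`Φ` is constant, equal to some `a`, near a point; the identity theorem then gives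
`(z - a) G_μ(z) = 1 - α` on a whole half-plane, whereas `(z - a) G_μ(z) → 1` along the imaginary
axis by dominated convergence.
-/

open MeasureTheory Complex

/-- The Cauchy (Stieltjes) transform of a measure on `ℝ`. -/
noncomputable def cauchyT (μ : Measure ℝ) (w : ℂ) : ℂ := ∫ t : ℝ, (w - (t : ℂ))⁻¹ ∂μ

open Filter Topology Metric Bornology

lemma isOpen_setOf_im_ne_zero : IsOpen {z : ℂ | z.im ≠ 0} :=
  isOpen_compl_singleton.preimage continuous_im

lemma abs_im_le_norm_sub_ofReal (z : ℂ) (t : ℝ) : |z.im| ≤ ‖z - t‖ := by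
  simpa using abs_im_le_norm (z - t)

lemma sub_ofReal_ne_zero_of_im_ne_zero {z : ℂ} (hz : z.im ≠ 0) (t : ℝ) : z - t ≠ 0 :=
  norm_pos_iff.1 ((abs_pos.2 hz).trans_le (abs_im_le_norm_sub_ofReal z t))

lemma sub_lt_abs_im_of_mem_ball {z w : ℂ} {r : ℝ} (hw : w ∈ ball z r) : |z.im| - r < |w.im| := by
  have hwz : |w.im - z.im| < r := by
    simpa using (abs_im_le_norm (w - z)).trans_lt (mem_ball_iff_norm.1 hw)
  linarith [abs_sub_abs_le_abs_sub z.im w.im, abs_sub_comm z.im w.im]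

lemma tendsto_sub_mul_inv_sub_cobounded {𝕜 : Type*} [NormedField 𝕜] (a b : 𝕜) :
    Tendsto (fun w => (w - a) * (w - b)⁻¹) (cobounded 𝕜) (𝓝 1) := by
  have hinv : Tendsto (fun w : 𝕜 => w⁻¹) (cobounded 𝕜) (𝓝 0) := tendsto_inv₀_cobounded
  have hlim : Tendsto (fun w : 𝕜 => (1 - a * w⁻¹) * (1 - b * w⁻¹)⁻¹) (cobounded 𝕜) (𝓝 1) := by
    simpa using ((hinv.const_mul a).const_sub 1).mul
      (((hinv.const_mul b).const_sub 1).inv₀ (by simp))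
  refine hlim.congr' ?_
  filter_upwards [eventually_ne_cobounded 0] with w hw
  field_simp

theorem AnalyticOnNhd.isOpen_image_of_forall_not_eventually_eq {E : Type*} [NormedAddCommGroup E]
    [NormedSpace ℂ E] {f : E → ℂ} {U : Set E} (hf : AnalyticOnNhd ℂ f U) (hU : IsOpen U)
    (hnc : ∀ z ∈ U, ¬ ∀ᶠ w in 𝓝 z, f w = f z) : IsOpen (f '' U) := by
  refine isOpen_iff_mem_nhds.2 ?_
  rintro _ ⟨z, hz, rfl⟩
  exact (hf z hz).eventually_constant_or_nhds_le_map_nhds.resolve_left (hnc z hz)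
    (image_mem_map (hU.mem_nhds hz))

section CauchyTransform

variable (μ : Measure ℝ)

lemma integrable_inv_sub_ofReal [IsFiniteMeasure μ] {z : ℂ} (hz : z.im ≠ 0) :
    Integrable (fun t : ℝ => (z - t)⁻¹) μ := by
  refine (integrable_const |z.im|⁻¹).mono' (by fun_prop) (.of_forall fun t => ?_)
  rw [norm_inv]
  exact inv_anti₀ (abs_pos.2 hz) (abs_im_le_norm_sub_ofReal z t)

lemma hasDerivAt_cauchyT [IsFiniteMeasure μ] {z : ℂ} (hz : z.im ≠ 0) :
    HasDerivAt (cauchyT μ) (∫ t : ℝ, -((z - t) ^ 2)⁻¹ ∂μ) z := by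
  set r := |z.im| / 2 with hr_def
  have hr : 0 < r := by positivity
  have him : ∀ w ∈ ball z r, r < |w.im| := fun w hw => by
    linarith [sub_lt_abs_im_of_mem_ball hw]
  refine (hasDerivAt_integral_of_dominated_loc_of_deriv_le (μ := μ)
    (F := fun (w : ℂ) (t : ℝ) => (w - t)⁻¹) (F' := fun (w : ℂ) (t : ℝ) => -((w - t) ^ 2)⁻¹)
    (ball_mem_nhds z hr) (.of_forall fun w => by fun_prop)
    (integrable_inv_sub_ofReal μ hz) (by fun_prop)
    (.of_forall fun t w hw => ?_) (integrable_const (r ^ 2)⁻¹)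
    (.of_forall fun t w hw => ?_)).2
  · rw [norm_neg, norm_inv, norm_pow]
    exact inv_anti₀ (by positivity) (pow_le_pow_left₀ hr.le
      ((him w hw).le.trans (abs_im_le_norm_sub_ofReal w t)) 2)
  · have hw0 : w.im ≠ 0 := abs_pos.1 (hr.trans (him w hw))
    exact (hasDerivAt_inv (sub_ofReal_ne_zero_of_im_ne_zero hw0 t)).comp_sub_const w t

lemma analyticOnNhd_cauchyT [IsFiniteMeasure μ] : AnalyticOnNhd ℂ (cauchyT μ) {z | z.im ≠ 0} :=
  DifferentiableOn.analyticOnNhd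
    (fun _ hz => (hasDerivAt_cauchyT μ hz).differentiableAt.differentiableWithinAt)
    isOpen_setOf_im_ne_zero

lemma tendsto_sub_mul_cauchyT_ofReal_mul_I [IsProbabilityMeasure μ] (a : ℂ) {s : ℝ} (hs : s ≠ 0) :
    Tendsto (fun y : ℝ => ((y * s : ℝ) * I - a) * cauchyT μ ((y * s : ℝ) * I)) atTop (𝓝 1) := by
  set w : ℝ → ℂ := fun y => (y * s : ℝ) * I
  have hw_norm : ∀ y, ‖w y‖ = |y * s| := fun y => by simp [w]
  have hw : Tendsto w atTop (cobounded ℂ) := by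
    refine tendsto_norm_atTop_iff_cobounded.1 ?_
    simpa only [hw_norm, abs_mul] using tendsto_abs_atTop_atTop.atTop_mul_const (abs_pos.2 hs)
  have hw_le : ∀ y (t : ℝ), ‖w y‖ ≤ ‖w y - t‖ := fun y t => by
    simpa [hw_norm, w] using abs_im_le_norm_sub_ofReal (w y) t
  change Tendsto (fun y => (w y - a) * cauchyT μ (w y)) atTop (𝓝 1)
  simp only [cauchyT, ← integral_const_mul]
  have hlim := tendsto_integral_filter_of_dominated_convergence (μ := μ)
    (F := fun y (t : ℝ) => (w y - a) * (w y - t)⁻¹) (fun _ => 1 + ‖a‖)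
    (.of_forall fun y => by fun_prop) ?_ (integrable_const _)
    (.of_forall fun t => (tendsto_sub_mul_inv_sub_cobounded a (t : ℂ)).comp hw)
  · simpa using hlim
  filter_upwards [(tendsto_norm_atTop_iff_cobounded.2 hw).eventually_ge_atTop 1] with y hy
  refine .of_forall fun t => ?_
  have hpos : 0 < ‖w y‖ := one_pos.trans_le hy
  calc ‖(w y - a) * (w y - t)⁻¹‖ ≤ (‖w y‖ + ‖a‖) / ‖w y‖ := by
        rw [norm_mul, norm_inv, ← div_eq_mul_inv]
        exact div_le_div₀ (by positivity) (norm_sub_le _ _) hpos (hw_le y t)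
    _ = 1 + ‖a‖ / ‖w y‖ := by field_simp
    _ ≤ 1 + ‖a‖ := by gcongr; exact div_le_self (norm_nonneg a) hy

lemma not_eventually_sub_mul_cauchyT_eq [IsProbabilityMeasure μ] {z₀ a β : ℂ}
    (hz₀ : z₀.im ≠ 0) (hβ : β ≠ 1) : ¬ ∀ᶠ z in 𝓝 z₀, (z - a) * cauchyT μ z = β := by
  intro h
  set H := {z : ℂ | 0 < z.im * z₀.im}
  have hH_im : ∀ z ∈ H, z.im ≠ 0 := fun z hz h0 => by simp [H, h0] at hz
  have hH_conv : Convex ℝ H :=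
    convex_halfSpace_gt ⟨fun z w => by simp [add_mul], fun c z => by simp [mul_assoc]⟩ 0
  have hf : AnalyticOnNhd ℂ (fun z => (z - a) * cauchyT μ z) H := fun z hz =>
    (analyticAt_id.sub analyticAt_const).mul (analyticOnNhd_cauchyT μ z (hH_im z hz))
  have hEq := hf.eqOn_of_preconnected_of_eventuallyEq analyticOnNhd_const
    hH_conv.isPreconnected (mul_self_pos.2 hz₀) h
  have hev : ∀ᶠ y : ℝ in atTop,
      ((y * z₀.im : ℝ) * I - a) * cauchyT μ ((y * z₀.im : ℝ) * I) = β := by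
    filter_upwards [eventually_gt_atTop 0] with y hy
    exact hEq (by simpa [H, mul_assoc] using mul_pos hy (mul_self_pos.2 hz₀))
  exact hβ (tendsto_nhds_unique ((tendsto_sub_mul_cauchyT_ofReal_mul_I μ a hz₀).congr' hev)
    tendsto_const_nhds).symm

lemma isOpen_image_sub_div_cauchyT [IsProbabilityMeasure μ] {β : ℂ} (hβ : β ≠ 1) :
    IsOpen ((fun z => z - β / cauchyT μ z) '' {z | z.im ≠ 0 ∧ cauchyT μ z ≠ 0}) := by
  refine AnalyticOnNhd.isOpen_image_of_forall_not_eventually_eq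
    (fun z hz => analyticAt_id.sub (analyticAt_const.div (analyticOnNhd_cauchyT μ z hz.1) hz.2))
    ((analyticOnNhd_cauchyT μ).continuousOn.isOpen_inter_preimage isOpen_setOf_im_ne_zero
      isOpen_compl_singleton)
    fun z₀ hz₀ h => not_eventually_sub_mul_cauchyT_eq μ (a := z₀ - β / cauchyT μ z₀) hz₀.1 hβ ?_
  have hG : ∀ᶠ z in 𝓝 z₀, cauchyT μ z ≠ 0 :=
    (analyticOnNhd_cauchyT μ z₀ hz₀.1).continuousAt.eventually_ne hz₀.2
  filter_upwards [h, hG] with z hz hGz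
  rw [← hz, sub_sub_cancel, div_mul_cancel₀ _ hGz]

end CauchyTransform

theorem stmt6_general (μ : Measure ℝ) [IsProbabilityMeasure μ]
    (α : ℝ) (hα : α ∈ Set.Ioo (0 : ℝ) 1) :
    IsOpen {c : ℝ | ∃ w : ℂ, w.im ≠ 0 ∧ w * cauchyT μ (w + c) = ((1 - α : ℝ) : ℂ)} := by
  have hβ0 : ((1 - α : ℝ) : ℂ) ≠ 0 := ofReal_ne_zero.2 (sub_ne_zero.2 hα.2.ne')
  have hβ1 : ((1 - α : ℝ) : ℂ) ≠ 1 := by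
    rw [Ne, ofReal_eq_one, sub_eq_self]
    exact hα.1.ne'
  convert (isOpen_image_sub_div_cauchyT μ hβ1).preimage continuous_ofReal using 1
  ext c
  constructor
  · rintro ⟨w, hw, hwG⟩
    have hG : cauchyT μ (w + c) ≠ 0 := fun h => hβ0 (by rw [← hwG, h, mul_zero])
    refine ⟨w + c, ⟨by simpa using hw, hG⟩, ?_⟩
    dsimp only
    rw [← hwG, mul_div_cancel_right₀ _ hG, add_sub_cancel_left]
  · rintro ⟨z, ⟨hz, hG⟩, hzc⟩
    refine ⟨z - c, by simpa using hz, ?_⟩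
    dsimp only at hzc
    rw [sub_add_cancel, ← hzc, sub_sub_cancel, div_mul_cancel₀ _ hG]

theorem stmt6 (μ : Measure ℝ) [IsProbabilityMeasure μ]
    (hcomp : ∃ K : Set ℝ, IsCompact K ∧ μ Kᶜ = 0)
    (hnotpoint : ∀ t : ℝ, μ ≠ Measure.dirac t)
    (α : ℝ) (hα : α ∈ Set.Ioo (0 : ℝ) 1) :
    IsOpen {c : ℝ | ∃ w : ℂ, w.im ≠ 0 ∧ w * cauchyT μ (w + c) = ((1 - α : ℝ) : ℂ)} :=
  stmt6_general μ α hα
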